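/- arXiv:2010.02615 — 5 statements merged into one kernel-verified Lean document; each statement's English description precedes it below -/
import Mathlib

section
/- Let X be a Banach space, Y a Banach space, and T : c₀(X) → Y a bounded linear operator of norm 1. Suppose y₀* ∈ S_{Y*}, x₀ ∈ S_{c₀(X)}, and 0 < η < 1 satisfy y₀*(T x₀) = ‖T x₀‖ > 1 − η. Then for every 0 < η' < 1, the set A := { i ∈ ℕ : Re [(T* y₀*)(i)](x₀(i)) > (1 − η') ‖(T* y₀*)(i)‖ } satisfies ∑_{i ∈ A} ‖(T* y₀*)(i)‖ > 1 − η/η'. -/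
open scoped ZeroAtInfty

/-!
Put `w i = ‖g i‖` and `r i = Re (g i (x₀ i)) ≤ w i`. With `A` the set where `r > (1 - η') w`,
`a = ∑_A w` and `b = ∑_{Aᶜ} w`, one has `1 - η < ∑ r ≤ a + (1 - η') b` and `a + b ≤ 1`;
as `1 - η' ≥ 0`, eliminating `b` gives `η' a > η' - η`.
-/

theorem ZeroAtInftyContinuousMap.norm_apply_le {α β : Type*} [TopologicalSpace α]
    [SeminormedAddCommGroup β] (f : C₀(α, β)) (x : α) : ‖f x‖ ≤ ‖f‖ :=
  f.norm_toBCF_eq_norm ▸ f.toBCF.norm_coe_le_norm x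

section Indicator

variable {ι : Type*} {w r : ι → ℝ}

theorem tsum_le_tsum_indicator_add_mul_tsum_indicator_compl (hw : Summable w) (hr : Summable r)
    (hrw : ∀ i, r i ≤ w i) (c : ℝ) :
    ∑' i, r i ≤ ∑' i, {i | c * w i < r i}.indicator w i
      + c * ∑' i, {i | c * w i < r i}ᶜ.indicator w i := by
  set A := {i | c * w i < r i}
  rw [← tsum_mul_left, ← (hw.indicator A).tsum_add ((hw.indicator Aᶜ).mul_left c)]
  refine hr.tsum_le_tsum (fun i => ?_) ((hw.indicator A).add ((hw.indicator Aᶜ).mul_left c))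
  by_cases hi : i ∈ A
  · simpa [hi] using hrw i
  · simpa [hi] using not_lt.mp hi

theorem one_sub_div_lt_tsum_indicator (hw : Summable w) (hw1 : ∑' i, w i ≤ 1)
    (hr : Summable r) (hrw : ∀ i, r i ≤ w i) {η η' : ℝ} (hη'0 : 0 < η') (hη'1 : η' ≤ 1)
    (hr_gt : 1 - η < ∑' i, r i) :
    1 - η / η' < ∑' i, {i | (1 - η') * w i < r i}.indicator w i := by
  set A := {i | (1 - η') * w i < r i}
  set a := ∑' i, A.indicator w i
  set b := ∑' i, Aᶜ.indicator w i
  have hsplit : a + b ≤ 1 := by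
    rwa [← (hw.indicator A).tsum_add (hw.indicator Aᶜ),
      funext (A.indicator_self_add_compl_apply w)]
  have hab : 1 - η < a + (1 - η') * b :=
    hr_gt.trans_le (tsum_le_tsum_indicator_add_mul_tsum_indicator_compl hw hr hrw _)
  rw [sub_lt_iff_lt_add, ← sub_lt_iff_lt_add', lt_div_iff₀ hη'0]
  nlinarith

end Indicator

/-- `g i` stands for `(T* y₀*)(i)`, the `i`-th coordinate of `T* y₀*` in `(c₀(X))* = ℓ₁(X*)`. -/
theorem lemma_convex_series_estimate2_first_general
    (X Y : Type*) [NormedAddCommGroup X] [NormedSpace ℂ X]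
    [NormedAddCommGroup Y] [NormedSpace ℂ Y]
    (T : C₀(ℕ, X) →L[ℂ] Y) (hT : ‖T‖ = 1)
    (y₀ : Y →L[ℂ] ℂ)
    (x₀ : C₀(ℕ, X)) (hx₀ : ‖x₀‖ = 1)
    (g : ℕ → (X →L[ℂ] ℂ))
    (hg_sum : Summable fun i => ‖g i‖)
    (hg_le : ∑' i, ‖g i‖ ≤ ‖T‖)
    (hg_repr : ∀ x : C₀(ℕ, X), y₀ (T x) = ∑' i, g i (x i))
    (η : ℝ)
    (heq : y₀ (T x₀) = (‖T x₀‖ : ℂ)) (hbig : ‖T x₀‖ > 1 - η)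
    (η' : ℝ) (hη'0 : 0 < η') (hη'1 : η' < 1) :
    ∑' i, Set.indicator
        {i : ℕ | ((g i) (x₀ i)).re > (1 - η') * ‖g i‖}
        (fun i => ‖g i‖) i > 1 - η / η' := by
  have hgx₀ : ∀ i, ‖g i (x₀ i)‖ ≤ ‖g i‖ := fun i =>
    ((g i).le_opNorm_of_le ((x₀.norm_apply_le i).trans hx₀.le)).trans_eq (mul_one _)
  have hsum : Summable fun i => g i (x₀ i) := hg_sum.of_norm_bounded hgx₀
  have hre_sum : ∑' i, (g i (x₀ i)).re = ‖T x₀‖ := by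
    rw [← Complex.re_tsum hsum, ← hg_repr, heq, Complex.ofReal_re]
  refine one_sub_div_lt_tsum_indicator hg_sum (hT ▸ hg_le)
    (hg_sum.of_norm_bounded fun i => (Complex.abs_re_le_norm _).trans (hgx₀ i))
    (fun i => (Complex.re_le_norm _).trans (hgx₀ i)) hη'0 hη'1.le ?_
  rwa [hre_sum]

/-- Lemma 2.4 (first part).  Here `g i = (T* y₀*)(i)` is the sequence in `X*`
representing the functional `T* y₀*` under the identification `(c₀(X))* = ℓ₁(X*)`. -/
theorem lemma_convex_series_estimate2_first
    (X Y : Type*) [NormedAddCommGroup X] [NormedSpace ℂ X] [CompleteSpace X]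
    [NormedAddCommGroup Y] [NormedSpace ℂ Y] [CompleteSpace Y]
    (T : C₀(ℕ, X) →L[ℂ] Y) (hT : ‖T‖ = 1)
    (y₀ : Y →L[ℂ] ℂ) (hy₀ : ‖y₀‖ = 1)
    (x₀ : C₀(ℕ, X)) (hx₀ : ‖x₀‖ = 1)
    (g : ℕ → (X →L[ℂ] ℂ))
    (hg_sum : Summable fun i => ‖g i‖)
    (hg_le : ∑' i, ‖g i‖ ≤ ‖T‖)
    (hg_repr : ∀ x : C₀(ℕ, X), y₀ (T x) = ∑' i, g i (x i))
    (η : ℝ) (hη0 : 0 < η) (hη1 : η < 1)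
    (heq : y₀ (T x₀) = (‖T x₀‖ : ℂ)) (hbig : ‖T x₀‖ > 1 - η)
    (η' : ℝ) (hη'0 : 0 < η') (hη'1 : η' < 1) :
    ∑' i, Set.indicator
        {i : ℕ | ((g i) (x₀ i)).re > (1 - η') * ‖g i‖}
        (fun i => ‖g i‖) i > 1 - η / η' :=
  lemma_convex_series_estimate2_first_general X Y T hT y₀ x₀ hx₀ g hg_sum hg_le hg_repr η heq hbig
    η' hη'0 hη'1
end

section
/- Let X be a Banach space, Y a Banach space, T : c₀(X) → Y of norm 1, y₀* ∈ S_{Y*}, x₀ ∈ S_{c₀(X)}, and 0 < η, η' < 1 with y₀*(T x₀) = ‖T x₀‖ > 1 − η. With A := { i : Re [(T* y₀*)(i)](x₀(i)) > (1 − η') ‖(T* y₀*)(i)‖ }, one has Re ∑_{i ∈ A} [(T* y₀*)(i)](x₀(i)) > (1 − η/η')(1 − η'). -/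
open scoped ZeroAtInfty

/-- Lemma 2.4 (second part, "in particular"). -/
theorem lemma_convex_series_estimate2_second
    (X Y : Type*) [NormedAddCommGroup X] [NormedSpace ℂ X] [CompleteSpace X]
    [NormedAddCommGroup Y] [NormedSpace ℂ Y] [CompleteSpace Y]
    (T : C₀(ℕ, X) →L[ℂ] Y) (hT : ‖T‖ = 1)
    (y₀ : Y →L[ℂ] ℂ) (hy₀ : ‖y₀‖ = 1)
    (x₀ : C₀(ℕ, X)) (hx₀ : ‖x₀‖ = 1)
    (g : ℕ → (X →L[ℂ] ℂ))
    (hg_sum : Summable fun i => ‖g i‖)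
    (hg_le : ∑' i, ‖g i‖ ≤ ‖T‖)
    (hg_repr : ∀ x : C₀(ℕ, X), y₀ (T x) = ∑' i, g i (x i))
    (η η' : ℝ) (hη0 : 0 < η) (hη1 : η < 1) (hη'0 : 0 < η') (hη'1 : η' < 1)
    (heq : y₀ (T x₀) = (‖T x₀‖ : ℂ)) (hbig : ‖T x₀‖ > 1 - η) :
    (∑' i, Set.indicator
        {i : ℕ | ((g i) (x₀ i)).re > (1 - η') * ‖g i‖}
        (fun i => (g i) (x₀ i)) i).re > (1 - η / η') * (1 - η') := by
  set a : ℕ → ℂ := fun i => g i (x₀ i) with ha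
  set c : ℕ → ℝ := fun i => ‖g i‖ with hc
  set A : Set ℕ := {i : ℕ | (a i).re > (1 - η') * c i} with hA
  have hx_le : ∀ i, ‖x₀ i‖ ≤ 1 := by
    intro i
    have := x₀.toBCF.norm_coe_le_norm i
    rwa [ZeroAtInftyContinuousMap.norm_toBCF_eq_norm, hx₀] at this
  have hac : ∀ i, ‖a i‖ ≤ c i := by
    intro i
    calc ‖a i‖ ≤ ‖g i‖ * ‖x₀ i‖ := (g i).le_opNorm _
    _ ≤ ‖g i‖ * 1 := by
        exact mul_le_mul_of_nonneg_left (hx_le i) (norm_nonneg _)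
    _ = c i := by simp [hc]
  have ha_sum : Summable a := by
    exact Summable.of_norm (hg_sum.of_nonneg_of_le (fun i => norm_nonneg _) hac)
  have hr_sum : Summable (fun i => (a i).re) := by
    exact (Complex.reCLM : ℂ →L[ℝ] ℝ).summable ha_sum
  -- indicator sums
  have hfA_sum : Summable (A.indicator a) := ha_sum.indicator A
  have hrA_sum : Summable (A.indicator fun i => (a i).re) := hr_sum.indicator A
  have hrB_sum : Summable (Aᶜ.indicator fun i => (a i).re) := hr_sum.indicator Aᶜ
  have hcA_sum : Summable (A.indicator c) := hg_sum.indicator A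
  have hcB_sum : Summable (Aᶜ.indicator c) := hg_sum.indicator Aᶜ
  -- rewrite goal
  have hgoal : (∑' i, A.indicator a i).re = ∑' i, A.indicator (fun i => (a i).re) i := by
    rw [Complex.re_tsum hfA_sum]
    congr 1
    funext i
    by_cases h : i ∈ A <;> simp [Set.indicator, h]
  -- total real sum
  have htot : ∑' i, (a i).re = ‖T x₀‖ := by
    rw [← Complex.re_tsum ha_sum, ← hg_repr x₀, heq, Complex.ofReal_re]
  have hsplit : (∑' i, A.indicator (fun i => (a i).re) i)
      + (∑' i, Aᶜ.indicator (fun i => (a i).re) i) = ∑' i, (a i).re := by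
    rw [← Summable.tsum_add hrA_sum hrB_sum]
    congr 1
    funext i
    simp [Set.indicator_self_add_compl_apply]
  have hcsplit : (∑' i, A.indicator c i) + (∑' i, Aᶜ.indicator c i) = ∑' i, c i := by
    rw [← Summable.tsum_add hcA_sum hcB_sum]
    congr 1
    funext i
    simp [Set.indicator_self_add_compl_apply]
  set SA := ∑' i, A.indicator (fun i => (a i).re) i
  set SB := ∑' i, Aᶜ.indicator (fun i => (a i).re) i
  set tA := ∑' i, A.indicator c i
  set tB := ∑' i, Aᶜ.indicator c i
  have hre_le : ∀ i, (a i).re ≤ c i := fun i =>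
    le_trans (Complex.re_le_norm _) (hac i)
  have hSA_le : SA ≤ tA := by
    refine Summable.tsum_le_tsum (fun i => ?_) hrA_sum hcA_sum
    by_cases h : i ∈ A <;> simp [Set.indicator, h, hre_le i]
  have hSB_le : SB ≤ (1 - η') * tB := by
    rw [← tsum_mul_left]
    refine Summable.tsum_le_tsum (fun i => ?_) hrB_sum (hcB_sum.mul_left _)
    by_cases h : i ∈ A
    · simp [Set.indicator, h]
    · simp only [Set.indicator, Set.mem_compl_iff, h, not_false_iff, if_true, if_neg h]
      exact le_of_not_gt (by simpa [hA] using h)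
  have hSA_nonneg : 0 ≤ SA := by
    refine tsum_nonneg (fun i => ?_)
    by_cases h : i ∈ A
    · have : (0:ℝ) ≤ (a i).re := by
        have h1 : (1 - η') * c i < (a i).re := h
        have h2 : 0 ≤ (1 - η') * c i :=
          mul_nonneg (by linarith) (norm_nonneg _)
        linarith
      simpa [Set.indicator, h]
    · simp [Set.indicator, h]
  have htB_nonneg : 0 ≤ tB := tsum_nonneg (fun i => Set.indicator_nonneg (fun i _ => norm_nonneg _) i)
  have htot_le : ∑' i, c i ≤ 1 := by rwa [hT] at hg_le
  have hsum_big : SA + SB > 1 - η := by rw [hsplit, htot]; exact hbig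
  have htB_lt : tB < η / η' := by
    have h1 : 1 - η < tA + (1 - η') * tB := by linarith
    have h2 : tA ≤ 1 - tB := by linarith
    have h3 : η' * tB < η := by nlinarith
    rw [lt_div_iff₀ hη'0]
    linarith [mul_comm η' tB]
  have hSA_big : SA > 1 - η / η' := by
    have h4 : (1 - η') * tB < (1 - η') * (η / η') := by
      exact mul_lt_mul_of_pos_left htB_lt (by linarith)
    have h5 : (1 - η') * (η / η') = η / η' - η := by
      field_simp
    linarith
  rw [hgoal]
  rcases le_or_gt 0 (1 - η / η') with h | h
  · nlinarith
  · nlinarith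
end

section
/- Let Y be a ℂ-uniformly convex complex Banach space with modulus of ℂ-convexity δ_ℂ. Fix ε > 0. If T : c₀(X) → Y has ‖T‖ ≤ 1 and A ⊂ ℕ satisfies ‖T P_A‖ ≥ 1 − δ_ℂ(ε)/(1 + δ_ℂ(ε)), then ‖T (I − P_A)‖ ≤ ε, where P_A is the canonical band projection onto the coordinates in A. -/
open scoped ZeroAtInfty

/-- The modulus of ℂ-convexity of a complex normed space `Y`. -/
noncomputable def cplxConvexityModulus (Y : Type*) [NormedAddCommGroup Y] [NormedSpace ℂ Y]
    (ε : ℝ) : ℝ :=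
  sInf { d : ℝ | ∃ x y : Y, ‖x‖ = 1 ∧ ‖y‖ = 1 ∧
    d = sSup { r : ℝ | ∃ lam : ℂ, ‖lam‖ = 1 ∧ r = ‖x + (lam * (ε : ℂ)) • y‖ - 1 } }

/-!
Suppose `‖T (I - P)‖ > ε`, so that `b = ‖T w‖ > ε` for some `w = v - P v` with `‖v‖ < 1`.
As `P u` and `w` have disjoint supports, `‖P u + λ w‖ ≤ 1` whenever `‖u‖ ≤ 1` and `|λ| = 1`, so
`x₀ = T (P u)` and `y₀ = T w` satisfy `‖x₀ + λ y₀‖ ≤ 1`. With `a = ‖x₀‖`, the identity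
`x₀ / a + λ ε y₀ / b = (1 - ε a / b) (x₀ / a) + (ε / b) (x₀ + λ y₀)` gives
`‖x₀ / a + λ ε y₀ / b‖ ≤ 1 + ε (1 - a) / b`, hence `δ_ℂ(ε) b ≤ ε (1 - a)`. Therefore
`‖T P‖ ≤ 1 - δ_ℂ(ε) b / ε < 1 - δ_ℂ(ε)`, contradicting the hypothesis on `‖T P‖`.
-/

namespace ZeroAtInftyContinuousMap

variable {α X : Type*} [TopologicalSpace α] [NormedAddCommGroup X]

lemma norm_le_of_forall_norm_apply_le {f : C₀(α, X)} {C : ℝ} (hC : 0 ≤ C)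
    (h : ∀ i, ‖f i‖ ≤ C) : ‖f‖ ≤ C := by
  rw [← norm_toBCF_eq_norm]
  exact (BoundedContinuousFunction.norm_le hC).mpr h

lemma norm_indicator_add_smul_sub_indicator_le {𝕜 : Type*} [NormedField 𝕜] [NormedSpace 𝕜 X]
    {A : Set α} {P : C₀(α, X) → C₀(α, X)} (hP : ∀ f i, P f i = A.indicator f i)
    (f g : C₀(α, X)) {c : 𝕜} (hc : ‖c‖ ≤ 1) : ‖P f + c • (g - P g)‖ ≤ max ‖f‖ ‖g‖ := by
  refine norm_le_of_forall_norm_apply_le ((norm_nonneg f).trans (le_max_left _ _)) fun i => ?_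
  simp only [coe_add, coe_smul, coe_sub, Pi.add_apply, Pi.smul_apply, Pi.sub_apply, hP]
  by_cases hi : i ∈ A
  · simpa [hi] using (f.toBCF.norm_coe_le_norm i).trans (le_max_left _ _)
  · simpa [hi, norm_smul] using (mul_le_of_le_one_left (norm_nonneg _) hc).trans
      ((g.toBCF.norm_coe_le_norm i).trans (le_max_right _ _))

end ZeroAtInftyContinuousMap

section ConvexityModulus

variable {Y : Type*} [NormedAddCommGroup Y] [NormedSpace ℂ Y] {ε : ℝ}

lemma cplxConvexityModulus_le {x y : Y} (hx : ‖x‖ = 1) (hy : ‖y‖ = 1) {c : ℝ}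
    (h : ∀ lam : ℂ, ‖lam‖ = 1 → ‖x + (lam * ε) • y‖ ≤ 1 + c) :
    cplxConvexityModulus Y ε ≤ c := by
  have hBdd : BddBelow { d : ℝ | ∃ x y : Y, ‖x‖ = 1 ∧ ‖y‖ = 1 ∧
      d = sSup { r : ℝ | ∃ lam : ℂ, ‖lam‖ = 1 ∧ r = ‖x + (lam * ε) • y‖ - 1 } } := by
    refine ⟨-1, ?_⟩
    rintro d ⟨x, y, -, -, rfl⟩
    by_cases hS : BddAbove { r : ℝ | ∃ lam : ℂ, ‖lam‖ = 1 ∧ r = ‖x + (lam * ε) • y‖ - 1 }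
    · exact le_csSup_of_le hS ⟨1, norm_one, rfl⟩ (by linarith [norm_nonneg (x + (1 * ε : ℂ) • y)])
    · rw [Real.sSup_of_not_bddAbove hS]
      norm_num
  refine csInf_le_of_le hBdd ⟨x, y, hx, hy, rfl⟩ (csSup_le ⟨_, 1, norm_one, rfl⟩ ?_)
  rintro r ⟨lam, hlam, rfl⟩
  linarith [h lam hlam]

lemma cplxConvexityModulus_le_self {z : Y} (hz : ‖z‖ = 1) (hε : 0 ≤ ε) :
    cplxConvexityModulus Y ε ≤ ε :=
  cplxConvexityModulus_le hz hz fun lam hlam => (norm_add_le _ _).trans_eq <| by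
    simp [norm_smul, hz, hlam, abs_of_nonneg hε]

lemma norm_le_one_of_forall_norm_add_smul_le_one {x₀ y₀ : Y}
    (h : ∀ lam : ℂ, ‖lam‖ = 1 → ‖x₀ + lam • y₀‖ ≤ 1) : ‖x₀‖ ≤ 1 := by
  have hx₀ : x₀ = (2⁻¹ : ℂ) • (x₀ + (1 : ℂ) • y₀) + (2⁻¹ : ℂ) • (x₀ + (-1 : ℂ) • y₀) := by
    match_scalars <;> ring
  have h₁ := h 1 norm_one
  have h₂ := h (-1) (by simp)
  rw [hx₀]
  refine (norm_add_le _ _).trans ?_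
  simp only [norm_smul, norm_inv, Complex.norm_ofNat]
  linarith

lemma cplxConvexityModulus_mul_norm_le {x₀ y₀ : Y} (hε : 0 < ε) (hy₀ : ε ≤ ‖y₀‖)
    (h : ∀ lam : ℂ, ‖lam‖ = 1 → ‖x₀ + lam • y₀‖ ≤ 1) :
    cplxConvexityModulus Y ε * ‖y₀‖ ≤ ε * (1 - ‖x₀‖) := by
  set a := ‖x₀‖ with ha
  set b := ‖y₀‖ with hb
  have hb₀ : 0 < b := hε.trans_le hy₀
  have ha₁ : a ≤ 1 := norm_le_one_of_forall_norm_add_smul_le_one h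
  set y : Y := (b : ℂ)⁻¹ • y₀
  have hy : ‖y‖ = 1 := by simp [y, norm_smul, ← hb, abs_of_pos hb₀, hb₀.ne']
  rcases (show 0 ≤ a from norm_nonneg x₀).eq_or_lt with ha₀ | ha₀
  · have hx₀ : x₀ = 0 := norm_eq_zero.mp ha₀.symm
    have hb₁ : b ≤ 1 := by simpa [hx₀] using h 1 norm_one
    calc cplxConvexityModulus Y ε * b ≤ ε * b :=
          mul_le_mul_of_nonneg_right (cplxConvexityModulus_le_self hy hε.le) hb₀.le
      _ ≤ ε * (1 - a) := by rw [← ha₀, sub_zero, mul_one]; exact mul_le_of_le_one_right hε.le hb₁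
  set x : Y := (a : ℂ)⁻¹ • x₀
  have hx : ‖x‖ = 1 := by simp [x, norm_smul, ← ha, abs_of_pos ha₀, ha₀.ne']
  have hcoef : 0 ≤ 1 - ε * a / b := by
    rw [sub_nonneg, div_le_one hb₀]
    nlinarith
  have hcomb : ∀ lam : ℂ, ‖lam‖ = 1 → ‖x + (lam * ε) • y‖ ≤ 1 + ε * (1 - a) / b := by
    intro lam hlam
    have hid : x + (lam * ε) • y
        = (1 - ε * a / b) • x + (ε / b) • (x₀ + lam • y₀) := by
      simp only [x, y]
      have : (a : ℂ) ≠ 0 := by exact_mod_cast ha₀.ne'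
      have : (b : ℂ) ≠ 0 := by exact_mod_cast hb₀.ne'
      match_scalars <;> simp only [Complex.coe_algebraMap] <;> field_simp
      ring
    calc ‖x + (lam * ε) • y‖
        ≤ (1 - ε * a / b) * ‖x‖ + ε / b * ‖x₀ + lam • y₀‖ := by
          rw [hid]
          refine (norm_add_le _ _).trans_eq ?_
          rw [norm_smul_of_nonneg hcoef, norm_smul_of_nonneg (by positivity)]
      _ ≤ (1 - ε * a / b) * 1 + ε / b * 1 := by
          rw [hx]; gcongr; exact h lam hlam
      _ = 1 + ε * (1 - a) / b := by ring
  have hδ := cplxConvexityModulus_le hx hy hcomb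
  rwa [le_div_iff₀ hb₀] at hδ

lemma cplxConvexityModulus_mul_norm_le_mul_one_sub_opNorm {E F : Type*} [NormedAddCommGroup E]
    [NormedSpace ℂ E] [NormedAddCommGroup F] [NormedSpace ℂ F] {T : F →L[ℂ] Y} (hT : ‖T‖ ≤ 1)
    {Q : E →L[ℂ] F} {w : F} (hw : ∀ u, ‖u‖ ≤ 1 → ∀ lam : ℂ, ‖lam‖ = 1 → ‖Q u + lam • w‖ ≤ 1)
    (hε : 0 < ε) (hTw : ε ≤ ‖T w‖) :
    cplxConvexityModulus Y ε * ‖T w‖ ≤ ε * (1 - ‖T.comp Q‖) := by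
  have hball : ∀ u, ‖u‖ ≤ 1 → ‖T.comp Q u‖ ≤ 1 - cplxConvexityModulus Y ε * ‖T w‖ / ε := by
    intro u hu
    have := cplxConvexityModulus_mul_norm_le hε hTw fun lam hlam => by
      rw [← map_smul, ← map_add]
      exact (T.le_opNorm _).trans (mul_le_one₀ hT (norm_nonneg _) (hw u hu lam hlam))
    rw [← div_le_iff₀' hε] at this
    simp only [ContinuousLinearMap.comp_apply]
    linarith
  have hC := (norm_nonneg _).trans (hball 0 (by simp))
  have := ContinuousLinearMap.opNorm_le_of_unit_norm hC fun u hu => hball u hu.le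
  rw [← div_le_iff₀' hε]
  linarith

end ConvexityModulus

theorem projection_estimate_c0_general
    (X Y : Type*) [NormedAddCommGroup X] [NormedSpace ℂ X]
    [NormedAddCommGroup Y] [NormedSpace ℂ Y]
    (hY : ∀ ε : ℝ, 0 < ε → 0 < cplxConvexityModulus Y ε)
    (ε : ℝ) (hε : 0 < ε)
    (T : C₀(ℕ, X) →L[ℂ] Y) (hT : ‖T‖ ≤ 1)
    (A : Set ℕ)
    (P : C₀(ℕ, X) →L[ℂ] C₀(ℕ, X))
    (hP : ∀ (x : C₀(ℕ, X)) (i : ℕ), P x i = A.indicator (fun j => x j) i)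
    (hTP : ‖T.comp P‖ ≥ 1 - cplxConvexityModulus Y ε / (1 + cplxConvexityModulus Y ε)) :
    ‖T - T.comp P‖ ≤ ε := by
  set δ := cplxConvexityModulus Y ε
  have hδ : 0 < δ := hY ε hε
  by_contra! hlt
  obtain ⟨v, hv, hεv⟩ := (T - T.comp P).exists_lt_apply_of_lt_opNorm hlt
  rw [sub_apply, ContinuousLinearMap.comp_apply, ← map_sub] at hεv
  have hdisj : ∀ u, ‖u‖ ≤ 1 → ∀ lam : ℂ, ‖lam‖ = 1 → ‖P u + lam • (v - P v)‖ ≤ 1 :=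
    fun u hu lam hlam =>
      (ZeroAtInftyContinuousMap.norm_indicator_add_smul_sub_indicator_le hP u v hlam.le).trans
        (max_le hu hv.le)
  have hbound := cplxConvexityModulus_mul_norm_le_mul_one_sub_opNorm hT hdisj hε hεv.le
  have hδ_le : δ / (1 + δ) ≤ δ := div_le_self hδ.le (by linarith)
  nlinarith [mul_lt_mul_of_pos_left hεv hδ]

/-- Lemma 2.2 (first part), [A, Lemma 2.3] for `c₀(X)`.
`P` is the canonical band projection onto the coordinates in `A`. -/
theorem projection_estimate_c0
    (X Y : Type*) [NormedAddCommGroup X] [NormedSpace ℂ X] [CompleteSpace X]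
    [NormedAddCommGroup Y] [NormedSpace ℂ Y] [CompleteSpace Y]
    (hY : ∀ ε : ℝ, 0 < ε → 0 < cplxConvexityModulus Y ε)
    (ε : ℝ) (hε : 0 < ε)
    (T : C₀(ℕ, X) →L[ℂ] Y) (hT : ‖T‖ ≤ 1)
    (A : Set ℕ)
    (P : C₀(ℕ, X) →L[ℂ] C₀(ℕ, X))
    (hP : ∀ (x : C₀(ℕ, X)) (i : ℕ), P x i = A.indicator (fun j => x j) i)
    (hTP : ‖T.comp P‖ ≥ 1 - cplxConvexityModulus Y ε / (1 + cplxConvexityModulus Y ε)) :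
    ‖T - T.comp P‖ ≤ ε :=
  projection_estimate_c0_general X Y hY ε hε T hT A P hP hTP
end

section
/- For any Banach spaces X and Y, if the pair (X, Y) has the Bishop–Phelps–Bollobás property for bilinear forms, then the pair (X, Y*) has the Bishop–Phelps–Bollobás property for operators. -/
/-- if `(X, Y)` has the Bishop–Phelps–Bollobás property for bilinear forms,
then `(X, Y*)` has the Bishop–Phelps–Bollobás property for operators.  Bilinear forms are
identified with elements of `X →L[ℂ] Y →L[ℂ] ℂ` and `Y* = Y →L[ℂ] ℂ`. -/
theorem BPBp_bilinear_implies_BPBp_operators_dual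
    (X Y : Type*) [NormedAddCommGroup X] [NormedSpace ℂ X] [CompleteSpace X]
    [NormedAddCommGroup Y] [NormedSpace ℂ Y] [CompleteSpace Y]
    (hbil : ∀ ε : ℝ, 0 < ε → ∃ η : ℝ, 0 < η ∧
      ∀ (T : X →L[ℂ] Y →L[ℂ] ℂ) (x₀ : X) (y₀ : Y),
        ‖T‖ = 1 → ‖x₀‖ = 1 → ‖y₀‖ = 1 → ‖T x₀ y₀‖ > 1 - η →
        ∃ (S : X →L[ℂ] Y →L[ℂ] ℂ) (u₀ : X) (v₀ : Y),
          ‖S‖ = 1 ∧ ‖u₀‖ = 1 ∧ ‖v₀‖ = 1 ∧ ‖S u₀ v₀‖ = 1 ∧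
          ‖u₀ - x₀‖ < ε ∧ ‖v₀ - y₀‖ < ε ∧ ‖S - T‖ < ε) :
    ∀ ε : ℝ, 0 < ε → ∃ η : ℝ, 0 < η ∧
      ∀ (T : X →L[ℂ] (Y →L[ℂ] ℂ)) (x₀ : X), ‖T‖ = 1 → ‖x₀‖ = 1 →
        ‖T x₀‖ > 1 - η →
        ∃ (S : X →L[ℂ] (Y →L[ℂ] ℂ)) (z₀ : X),
          ‖S‖ = 1 ∧ ‖z₀‖ = 1 ∧ ‖S z₀‖ = 1 ∧ ‖S - T‖ < ε ∧ ‖z₀ - x₀‖ < ε := by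
  intro ε hε
  obtain ⟨η, hη, H⟩ := hbil ε hε
  refine ⟨min η (1/2), lt_min hη (by norm_num), ?_⟩
  intro T x₀ hT hx₀ hTx
  -- find a nearly norming unit vector y₀
  have hlt : (1 : ℝ) - min η (1/2) < ‖T x₀‖ := hTx
  obtain ⟨y, hy1, hy2⟩ := (T x₀).exists_lt_apply_of_lt_opNorm hlt
  have hypos : (0:ℝ) < 1 - min η (1/2) := by
    have : min η (1/2) ≤ 1/2 := min_le_right _ _
    linarith
  have hfy : 0 < ‖T x₀ y‖ := lt_trans hypos hy2
  have hyne : y ≠ 0 := by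
    intro h; rw [h] at hfy; simp at hfy
  have hyn : 0 < ‖y‖ := norm_pos_iff.mpr hyne
  set y₀ : Y := (‖y‖⁻¹ : ℝ) • y with hy₀def
  have hy₀norm : ‖y₀‖ = 1 := by
    rw [hy₀def, norm_smul, Real.norm_eq_abs, abs_of_pos (inv_pos.mpr hyn)]
    field_simp
  have hval : ‖T x₀ y₀‖ = ‖y‖⁻¹ * ‖T x₀ y‖ := by
    rw [hy₀def, (T x₀).map_smul_of_tower, norm_smul, Real.norm_eq_abs, abs_of_pos (inv_pos.mpr hyn)]
  have hge : ‖T x₀ y‖ ≤ ‖T x₀ y₀‖ := by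
    rw [hval]
    have h1 : ‖y‖⁻¹ ≥ 1 := by
      rw [ge_iff_le, le_inv_comm₀ one_pos hyn]
      · simpa using hy1.le
    nlinarith [hfy]
  have hbig : ‖T x₀ y₀‖ > 1 - η := by
    have : (1:ℝ) - η ≤ 1 - min η (1/2) := by
      have := min_le_left η (1/2); linarith
    linarith [hge, hy2]
  obtain ⟨S, u₀, v₀, hS, hu, hv, hSuv, hux, hvy, hST⟩ := H T x₀ y₀ hT hx₀ hy₀norm hbig
  refine ⟨S, u₀, hS, hu, ?_, hST, hux⟩
  have h1 : ‖S u₀‖ ≤ 1 := by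
    have := S.le_opNorm u₀
    rw [hS, hu] at this; simpa using this
  have h2 : (1:ℝ) ≤ ‖S u₀‖ := by
    have := (S u₀).le_opNorm v₀
    rw [hv, hSuv] at this
    simpa using this
  linarith
end

section
/- Let Y be a ℂ-uniformly convex complex Banach space, n ∈ ℕ, X a Banach space, ε > 0, and T ∈ L(ℓ∞ⁿ(X), Y) with ‖T‖ ≤ 1. If A ⊂ {1, …, n} satisfies ‖T P_A‖ ≥ 1 − δ_ℂ(ε)/(1 + δ_ℂ(ε)), then ‖T (I − P_A)‖ ≤ ε. -/
section Modulus

variable {Y : Type*} [NormedAddCommGroup Y] [NormedSpace ℂ Y] {ε c : ℝ}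

lemma bddAbove_norm_add_unimodular_smul (x y : Y) :
    BddAbove {r : ℝ | ∃ lam : ℂ, ‖lam‖ = 1 ∧ r = ‖x + (lam * ε) • y‖ - 1} := by
  refine ⟨‖x‖ + |ε| * ‖y‖ - 1, ?_⟩
  rintro _ ⟨lam, hlam, rfl⟩
  have h := norm_add_le x ((lam * ε) • y)
  rw [norm_smul, norm_mul, hlam, Complex.norm_real, Real.norm_eq_abs, one_mul] at h
  linarith

lemma nonempty_norm_add_unimodular_smul (x y : Y) :
    {r : ℝ | ∃ lam : ℂ, ‖lam‖ = 1 ∧ r = ‖x + (lam * ε) • y‖ - 1}.Nonempty :=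
  ⟨_, 1, norm_one, rfl⟩

lemma cplxConvexityModulus_le_sSup {x y : Y} (hx : ‖x‖ = 1) (hy : ‖y‖ = 1) :
    cplxConvexityModulus Y ε ≤
      sSup {r : ℝ | ∃ lam : ℂ, ‖lam‖ = 1 ∧ r = ‖x + (lam * ε) • y‖ - 1} := by
  refine csInf_le ⟨-1, ?_⟩ ⟨x, y, hx, hy, rfl⟩
  rintro _ ⟨x', y', -, -, rfl⟩
  exact le_csSup_of_le (bddAbove_norm_add_unimodular_smul x' y') ⟨1, norm_one, rfl⟩
    (by linarith [norm_nonneg (x' + ((1 : ℂ) * ε) • y')])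

lemma exists_unimodular_lt_norm_add_smul {x y : Y} (hx : ‖x‖ = 1) (hy : ‖y‖ = 1)
    (hc : c < cplxConvexityModulus Y ε) :
    ∃ lam : ℂ, ‖lam‖ = 1 ∧ 1 + c < ‖x + (lam * ε) • y‖ := by
  obtain ⟨_, ⟨lam, hlam, rfl⟩, hlt⟩ := exists_lt_of_lt_csSup
    (nonempty_norm_add_unimodular_smul x y) (hc.trans_le (cplxConvexityModulus_le_sSup hx hy))
  exact ⟨lam, hlam, by linarith⟩

lemma exists_unimodular_lt_norm_add_smul_of_le {p q : Y} (hε : 0 < ε) (hp : p ≠ 0)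
    (hpq : ε * ‖p‖ ≤ ‖q‖) (hc : c < cplxConvexityModulus Y ε) :
    ∃ lam : ℂ, ‖lam‖ = 1 ∧ ε * ‖p‖ + ‖q‖ * c < ε * ‖p + lam • q‖ := by
  set a := ‖p‖
  set b := ‖q‖
  have ha : 0 < a := norm_pos_iff.2 hp
  have hb : 0 < b := (mul_pos hε ha).trans_le hpq
  obtain ⟨lam, hlam, hlt⟩ :=
    exists_unimodular_lt_norm_add_smul (x := (a : ℂ)⁻¹ • p) (y := (b : ℂ)⁻¹ • q)
      (norm_smul_inv_norm hp) (norm_smul_inv_norm (norm_pos_iff.1 hb)) hc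
  refine ⟨lam, hlam, ?_⟩
  -- `a⁻¹ p + ε lam b⁻¹ q` lies on the segment from `a⁻¹ p` to `a⁻¹ (p + lam q)`, since `ε a ≤ b`
  have hseg : ((a * b : ℝ) : ℂ) • ((a : ℂ)⁻¹ • p + (lam * ε) • (b : ℂ)⁻¹ • q) =
      ((b - ε * a : ℝ) : ℂ) • p + ((ε * a : ℝ) : ℂ) • (p + lam • q) := by
    have ha' : (a : ℂ) ≠ 0 := Complex.ofReal_ne_zero.2 ha.ne'
    have hb' : (b : ℂ) ≠ 0 := Complex.ofReal_ne_zero.2 hb.ne'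
    match_scalars
    · field_simp
      ring
    · field_simp
  have hconv : a * b * ‖(a : ℂ)⁻¹ • p + (lam * ε) • (b : ℂ)⁻¹ • q‖ ≤
      (b - ε * a) * a + ε * a * ‖p + lam • q‖ := by
    have h := norm_add_le (((b - ε * a : ℝ) : ℂ) • p) (((ε * a : ℝ) : ℂ) • (p + lam • q))
    rwa [← hseg, norm_smul, norm_smul, norm_smul, Complex.norm_real, Complex.norm_real,
      Complex.norm_real, Real.norm_of_nonneg (by positivity),
      Real.norm_of_nonneg (sub_nonneg.2 hpq), Real.norm_of_nonneg (by positivity)] at h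
  have h := mul_lt_mul_of_pos_left hlt (mul_pos ha hb)
  have : a * (ε * a + b * c) < a * (ε * ‖p + lam • q‖) := by linarith
  exact lt_of_mul_lt_mul_left this ha.le

end Modulus

section PiSupNorm

variable {ι E : Type*} [Fintype ι] [SeminormedAddCommGroup E]

lemma pi_norm_indicator_le (s : Set ι) (f : ι → E) : ‖s.indicator f‖ ≤ ‖f‖ :=
  (pi_norm_le_iff_of_nonneg (norm_nonneg f)).2 fun i =>
    (norm_indicator_le_norm_self f i).trans (norm_le_pi_norm f i)

lemma norm_indicator_add_smul_indicator_compl_le {𝕜 : Type*} [NormedField 𝕜] [NormedSpace 𝕜 E]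
    (s : Set ι) (f g : ι → E) {k : 𝕜} (hk : ‖k‖ ≤ 1) :
    ‖s.indicator f + k • sᶜ.indicator g‖ ≤ max ‖f‖ ‖g‖ := by
  refine (pi_norm_le_iff_of_nonneg (by positivity)).2 fun i => ?_
  by_cases hi : i ∈ s
  · simpa [hi] using le_max_of_le_left (norm_le_pi_norm f i)
  · simpa [hi, norm_smul] using
      le_max_of_le_right ((mul_le_of_le_one_left (norm_nonneg _) hk).trans (norm_le_pi_norm g i))

end PiSupNorm

theorem projection_estimate_finite_general
    (X Y : Type*) [NormedAddCommGroup X] [NormedSpace ℂ X]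
    [NormedAddCommGroup Y] [NormedSpace ℂ Y]
    (hY : ∀ ε : ℝ, 0 < ε → 0 < cplxConvexityModulus Y ε)
    (n : ℕ) (ε : ℝ) (hε : 0 < ε)
    (T : (Fin n → X) →L[ℂ] Y) (hT : ‖T‖ ≤ 1)
    (A : Set (Fin n))
    (P : (Fin n → X) →L[ℂ] (Fin n → X))
    (hP : ∀ (x : Fin n → X) (i : Fin n), P x i = A.indicator (fun j => x j) i)
    (hTP : ‖T.comp P‖ ≥ 1 - cplxConvexityModulus Y ε / (1 + cplxConvexityModulus Y ε)) :
    ‖T - T.comp P‖ ≤ ε := by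
  set δ := cplxConvexityModulus Y ε
  have hδ : 0 < δ := hY ε hε
  obtain ⟨c, hc, hcδ⟩ := exists_between (lt_min (div_lt_self hδ (by linarith : (1 : ℝ) < 1 + δ))
    ((div_lt_one (by positivity)).2 (by linarith : δ < 1 + δ)))
  have hc0 : 0 < c := lt_of_le_of_lt (by positivity) hc
  have hPA : ∀ x, P x = A.indicator x := fun x => funext (hP x)
  by_contra! hlarge
  obtain ⟨v, hv, hq⟩ := (T - T.comp P).exists_lt_apply_of_lt_opNorm hlarge
  obtain ⟨u, hu, hp⟩ := (T.comp P).exists_lt_apply_of_lt_opNorm (by linarith : 1 - c < ‖T.comp P‖)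
  rw [sub_apply, ContinuousLinearMap.comp_apply, ← map_sub] at hq
  rw [ContinuousLinearMap.comp_apply] at hp
  have hTPu : ‖T (P u)‖ ≤ 1 := (T.le_of_opNorm_le hT _).trans <| (one_mul _).trans_le <|
    hPA u ▸ (pi_norm_indicator_le A u).trans hu.le
  obtain ⟨lam, hlam, hgt⟩ := exists_unimodular_lt_norm_add_smul_of_le (p := T (P u))
    (q := T (v - P v)) hε (norm_pos_iff.1 (by linarith [min_le_right δ 1]))
    ((mul_le_of_le_one_right hε.le hTPu).trans hq.le) (hcδ.trans_le (min_le_left _ _))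
  have hsum : ‖T (P u + lam • (v - P v))‖ ≤ 1 := by
    rw [hPA, hPA, ← Set.indicator_compl]
    exact (T.le_of_opNorm_le hT _).trans <| (one_mul _).trans_le <|
      (norm_indicator_add_smul_indicator_compl_le A u v hlam.le).trans (max_le hu.le hv.le)
  rw [map_add, map_smul] at hsum
  refine lt_irrefl ε <| calc
    ε = ε * (1 - c) + ε * c := by ring
    _ < ε * ‖T (P u)‖ + ‖T (v - P v)‖ * c :=
      add_lt_add (mul_lt_mul_of_pos_left hp hε) (mul_lt_mul_of_pos_right hq hc0)
    _ < ε * ‖T (P u) + lam • T (v - P v)‖ := hgt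
    _ ≤ ε := mul_le_of_le_one_right hε.le hsum

/-- Lemma 2.2 (second part), for the finite sum `ℓ∞ⁿ(X) = Fin n → X` with
the maximum norm; `P` is the canonical band projection onto the coordinates in `A`. -/
theorem projection_estimate_finite
    (X Y : Type*) [NormedAddCommGroup X] [NormedSpace ℂ X] [CompleteSpace X]
    [NormedAddCommGroup Y] [NormedSpace ℂ Y] [CompleteSpace Y]
    (hY : ∀ ε : ℝ, 0 < ε → 0 < cplxConvexityModulus Y ε)
    (n : ℕ) (ε : ℝ) (hε : 0 < ε)
    (T : (Fin n → X) →L[ℂ] Y) (hT : ‖T‖ ≤ 1)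
    (A : Set (Fin n))
    (P : (Fin n → X) →L[ℂ] (Fin n → X))
    (hP : ∀ (x : Fin n → X) (i : Fin n), P x i = A.indicator (fun j => x j) i)
    (hTP : ‖T.comp P‖ ≥ 1 - cplxConvexityModulus Y ε / (1 + cplxConvexityModulus Y ε)) :
    ‖T - T.comp P‖ ≤ ε :=
  projection_estimate_finite_general X Y hY n ε hε T hT A P hP hTP
end
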